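/- arXiv:1409.2757 — 3 statements merged into one kernel-verified Lean document; each statement's English description precedes it below -/
import Mathlib

section
/- The 3D spherical hypercomplex multiplication does not distribute over addition: there exist h, h', h'' ∈ ℝ³ (with all relevant planar moduli nonzero) such that h·(h'+h'') ≠ h·h' + h·h'', where the product in Cartesian coordinates is (x,y,z)·(x',y',z') = ((xx'−yy')(1 − zz'/(ρρ')), (xy'+x'y)(1 − zz'/(ρρ')), ρz' + ρ'z) with ρ = √(x²+y²), ρ' = √(x'²+y'²). -/
noncomputable def pmod (p : ℝ × ℝ × ℝ) : ℝ := Real.sqrt (p.1^2 + p.2.1^2)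

noncomputable def cmul (p q : ℝ × ℝ × ℝ) : ℝ × ℝ × ℝ :=
  ((p.1 * q.1 - p.2.1 * q.2.1) * (1 - p.2.2 * q.2.2 / (pmod p * pmod q)),
   (p.1 * q.2.1 + q.1 * p.2.1) * (1 - p.2.2 * q.2.2 / (pmod p * pmod q)),
   pmod p * q.2.2 + pmod q * p.2.2)

/-!
The height of a product `h·h'` is `ρ z' + ρ' z`. For factors `h'`, `h''` in the plane `z = 0` the
height of `h·h'` is just `ρ' z`, so distributivity would force the planar modulus to be additive:
`ρ(h' + h'') = ρ(h') + ρ(h'')`. Two orthogonal unit vectors violate this, as `√2 ≠ 2`.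
-/

theorem cmul_snd_snd (p q : ℝ × ℝ × ℝ) : (cmul p q).2.2 = pmod p * q.2.2 + pmod q * p.2.2 :=
  rfl

theorem cmul_add_ne_of_pmod_add_ne {p q r : ℝ × ℝ × ℝ} (hp : p.2.2 ≠ 0) (hq : q.2.2 = 0)
    (hr : r.2.2 = 0) (hqr : pmod (q + r) ≠ pmod q + pmod r) :
    cmul p (q + r) ≠ cmul p q + cmul p r := by
  intro h
  have height := congrArg (fun s => s.2.2) h
  simp only [Prod.snd_add, cmul_snd_snd, hq, hr, add_zero, mul_zero, zero_add] at height
  exact hqr (mul_right_cancel₀ hp (by rw [height, add_mul]))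

theorem pmod_mk (x y z : ℝ) : pmod (x, y, z) = Real.sqrt (x ^ 2 + y ^ 2) :=
  rfl

theorem sqrt_two_ne_two : Real.sqrt 2 ≠ 2 := by
  intro h
  have := Real.sq_sqrt (zero_le_two : (0 : ℝ) ≤ 2)
  rw [h] at this
  norm_num at this

theorem stmt7 :
    ∃ h h' h'' : ℝ × ℝ × ℝ,
      pmod h ≠ 0 ∧ pmod h' ≠ 0 ∧ pmod h'' ≠ 0 ∧ pmod (h' + h'') ≠ 0 ∧
      cmul h (h' + h'') ≠ cmul h h' + cmul h h'' := by
  have hsum : ((1, 0, 0) + (0, 1, 0) : ℝ × ℝ × ℝ) = (1, 1, 0) := by norm_num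
  refine ⟨(1, 0, 1), (1, 0, 0), (0, 1, 0), ?_, ?_, ?_, ?_, ?_⟩
  · simp [pmod_mk]
  · simp [pmod_mk]
  · simp [pmod_mk]
  · simp [hsum, pmod_mk]
  · refine cmul_add_ne_of_pmod_add_ne one_ne_zero rfl rfl ?_
    norm_num [hsum, pmod_mk, sqrt_two_ne_two]
end

section
/- The spherical hypercomplex multiplication in Cartesian form preserves the Euclidean norm multiplicatively: if h'' = h·h' with components x'' = (xx'−yy')(1 − zz'/(ρρ')), y'' = (xy'+x'y)(1 − zz'/(ρρ')), z'' = ρz' + ρ'z, where ρ = √(x²+y²) > 0 and ρ' = √(x'²+y'²) > 0, then √(x''²+y''²+z''²) = √(x²+y²+z²)·√(x'²+y'²+z'²). -/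
/-!
The planar part of `h * h'` is the complex product `(x + iy)(x' + iy')`, of modulus `ρρ'`, scaled by
`1 - zz'/(ρρ')`; so `h * h'` has planar modulus `ρρ' - zz'` and height `ρz' + ρ'z`. Two applications of
the Brahmagupta–Fibonacci identity then give `|h h'|² = (ρ² + z²)(ρ'² + z'²) = |h|² |h'|²`.
-/

lemma sq_add_sq_mul_sq_add_sq_mul_sq {R : Type*} [CommRing R] (x y x' y' c : R) :
    (x ^ 2 + y ^ 2) * (x' ^ 2 + y' ^ 2) * c ^ 2 =
      ((x * x' - y * y') * c) ^ 2 + ((x * y' + x' * y) * c) ^ 2 := by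
  rw [sq_add_sq_mul_sq_add_sq, mul_comm x' y]
  ring

lemma sq_mul_one_sub_div_add_sq {K : Type*} [Field K] {r r' z z' : K} (h : r * r' ≠ 0) :
    (r * r' * (1 - z * z' / (r * r'))) ^ 2 + (r * z' + r' * z) ^ 2 =
      (r ^ 2 + z ^ 2) * (r' ^ 2 + z' ^ 2) := by
  rw [mul_one_sub, mul_div_cancel₀ _ h, sq_add_sq_mul_sq_add_sq, mul_comm r' z]

theorem stmt9 (x y z x' y' z' ρ ρ' x'' y'' z'' : ℝ)
    (hρ : ρ = Real.sqrt (x^2 + y^2)) (hρpos : 0 < ρ)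
    (hρ' : ρ' = Real.sqrt (x'^2 + y'^2)) (hρ'pos : 0 < ρ')
    (hx'' : x'' = (x * x' - y * y') * (1 - z * z' / (ρ * ρ')))
    (hy'' : y'' = (x * y' + x' * y) * (1 - z * z' / (ρ * ρ')))
    (hz'' : z'' = ρ * z' + ρ' * z) :
    Real.sqrt (x''^2 + y''^2 + z''^2) =
      Real.sqrt (x^2 + y^2 + z^2) * Real.sqrt (x'^2 + y'^2 + z'^2) := by
  have hρ2 : ρ ^ 2 = x ^ 2 + y ^ 2 := hρ ▸ Real.sq_sqrt (by positivity)
  have hρ'2 : ρ' ^ 2 = x' ^ 2 + y' ^ 2 := hρ' ▸ Real.sq_sqrt (by positivity)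
  have hnorm_sq : x'' ^ 2 + y'' ^ 2 + z'' ^ 2 = (x ^ 2 + y ^ 2 + z ^ 2) * (x' ^ 2 + y' ^ 2 + z' ^ 2) := by
    rw [hx'', hy'', hz'', ← sq_add_sq_mul_sq_add_sq_mul_sq, ← hρ2, ← hρ'2, ← mul_pow, ← mul_pow,
      sq_mul_one_sub_div_add_sq (by positivity)]
  rw [hnorm_sq, Real.sqrt_mul (by positivity)]
end

section
/- In the first-approach 3D Mandelbrot iteration x' = (x²−y²)(1 − z²/(x²+y²)) + a, y' = 2xy(1 − z²/(x²+y²)) + b, z' = 2z√(x²+y²) + c, the norm of the quadratic part equals the square of the norm of the input: ((x²−y²)(1−z²/(x²+y²)))² + (2xy(1−z²/(x²+y²)))² + (2z√(x²+y²))² = (x²+y²+z²)², provided (x,y) ≠ (0,0). -/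
/-! With `s = x² + y²`, the planar part is the complex square of `x + iy` (norm `s`) scaled by
`1 - z²/s`, so it has norm `s - z²`; the vertical part has square `4 z² s`, and
`(s - z²)² + 4 z² s = (s + z²)²`. -/

theorem sq_sub_sq_sq_add_two_mul_mul_sq {R : Type*} [CommRing R] (x y : R) :
    (x ^ 2 - y ^ 2) ^ 2 + (2 * x * y) ^ 2 = (x ^ 2 + y ^ 2) ^ 2 := by
  ring

theorem sq_add_sq_ne_zero_of_ne {x y : ℝ} (h : (x, y) ≠ (0, 0)) : x ^ 2 + y ^ 2 ≠ 0 := by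
  intro h0
  obtain ⟨rfl, rfl⟩ := mul_self_add_mul_self_eq_zero.mp (by simpa only [sq] using h0)
  exact h rfl

theorem stmt19 (x y z : ℝ) (h : (x, y) ≠ ((0 : ℝ), (0 : ℝ))) :
    ((x^2 - y^2) * (1 - z^2 / (x^2 + y^2)))^2
      + (2 * x * y * (1 - z^2 / (x^2 + y^2)))^2
      + (2 * z * Real.sqrt (x^2 + y^2))^2
      = (x^2 + y^2 + z^2)^2 := by
  set s := x ^ 2 + y ^ 2 with hs_def
  have hs : s ≠ 0 := sq_add_sq_ne_zero_of_ne h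
  have hscale : s * (1 - z ^ 2 / s) = s - z ^ 2 := by field_simp
  have hsqrt : Real.sqrt s ^ 2 = s := Real.sq_sqrt (by positivity)
  calc ((x^2 - y^2) * (1 - z^2 / s))^2 + (2 * x * y * (1 - z^2 / s))^2 + (2 * z * Real.sqrt s)^2
      = ((x ^ 2 - y ^ 2) ^ 2 + (2 * x * y) ^ 2) * (1 - z ^ 2 / s) ^ 2 + 4 * z ^ 2 * s := by
        rw [mul_pow _ (Real.sqrt s), hsqrt]; ring
    _ = (s - z ^ 2) ^ 2 + 4 * z ^ 2 * s := by
        rw [sq_sub_sq_sq_add_two_mul_mul_sq, ← hs_def, ← hscale]; ring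
    _ = (s + z ^ 2) ^ 2 := by ring
end
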